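/- Fix N ≥ 1, T ≥ 1, a total risk budget Δ ∈ (0, 1/2], and set δ_uni := Δ/(N·T). For each pair (i,k) with 1 ≤ i ≤ N and 1 ≤ k ≤ T, suppose there is a risk level δ_{ik} ∈ (0,1), a constraint index j, a slack d_{ikj} ∈ ℝ, and an uncertainty scale s_{ikj} > 0 such that (a) the uniform-risk tightened constraint holds: d_{ikj} ≥ √((1−δ_uni)/δ_uni) · s_{ikj}, and (b) the exact risk allocation holds with equality: d_{ikj} = √((1−δ_{ik})/δ_{ik}) · s_{ikj}. Then δ_{ik} ≤ δ_uni for every (i,k), and Σ_{k=1}^{T} Σ_{i=1}^{N} δ_{ik} ≤ Δ; i.e., every path feasible under uniform risk allocation is also feasible under exact risk allocation. -/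
import Mathlib


/-- Forward direction of Theorem 2 of the paper: every path feasible under
Uniform Risk Allocation (URA), with uniform risk `δ_uni = Δ/(N·T)`, is also
feasible under Exact Risk Allocation (ERA): the exact risks satisfy
`δ i k ≤ δ_uni` and their total sum respects the budget `Δ`. -/
theorem ura_feasible_implies_era_feasible
    (N T : ℕ) (hN : 1 ≤ N) (hT : 1 ≤ T)
    (Δ : ℝ) (hΔ : Δ ∈ Set.Ioc (0 : ℝ) (1 / 2))
    (δuni : ℝ) (hδuni : δuni = Δ / (N * T))
    (δ : Fin N → Fin T → ℝ) (d s : Fin N → Fin T → ℝ)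
    (hδmem : ∀ i k, δ i k ∈ Set.Ioo (0 : ℝ) 1)
    (hs : ∀ i k, 0 < s i k)
    (hura : ∀ i k, d i k ≥ Real.sqrt ((1 - δuni) / δuni) * s i k)
    (hera : ∀ i k, d i k = Real.sqrt ((1 - δ i k) / δ i k) * s i k) :
    (∀ i k, δ i k ≤ δuni) ∧ (∑ k, ∑ i, δ i k) ≤ Δ := by
  obtain ⟨hΔ0, hΔle⟩ := hΔ
  have hNT : (1 : ℝ) ≤ (N : ℝ) * (T : ℝ) := by
    have h1 : (1 : ℝ) ≤ (N : ℝ) := by exact_mod_cast hN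
    have h2 : (1 : ℝ) ≤ (T : ℝ) := by exact_mod_cast hT
    nlinarith
  have hNTpos : (0 : ℝ) < (N : ℝ) * (T : ℝ) := by linarith
  have hδuni_pos : 0 < δuni := by
    rw [hδuni]; positivity
  have hδuni_le : δuni ≤ Δ := by
    rw [hδuni, div_le_iff₀ hNTpos]; nlinarith
  have hδuni_lt1 : δuni < 1 := by linarith
  have key : ∀ i k, δ i k ≤ δuni := by
    intro i k
    obtain ⟨hδ0, hδ1⟩ := hδmem i k
    have hspos := hs i k
    have hsqrt : Real.sqrt ((1 - δuni) / δuni) ≤ Real.sqrt ((1 - δ i k) / δ i k) := by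
      have h := hura i k
      rw [hera i k] at h
      exact le_of_mul_le_mul_right h hspos
    have hb : (0 : ℝ) ≤ (1 - δuni) / δuni := by
      apply div_nonneg <;> linarith
    have ha : (0 : ℝ) ≤ (1 - δ i k) / δ i k := by
      apply div_nonneg <;> linarith
    have hle : (1 - δuni) / δuni ≤ (1 - δ i k) / δ i k := by
      calc (1 - δuni) / δuni = Real.sqrt ((1 - δuni) / δuni) ^ 2 := (Real.sq_sqrt hb).symm
        _ ≤ Real.sqrt ((1 - δ i k) / δ i k) ^ 2 := by
            apply pow_le_pow_left₀ (Real.sqrt_nonneg _) hsqrt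
        _ = (1 - δ i k) / δ i k := Real.sq_sqrt ha
    rw [div_le_div_iff₀ hδuni_pos hδ0] at hle
    nlinarith
  refine ⟨key, ?_⟩
  calc (∑ k, ∑ i, δ i k) ≤ ∑ k : Fin T, ∑ i : Fin N, δuni := by
        apply Finset.sum_le_sum; intro k _
        apply Finset.sum_le_sum; intro i _
        exact key i k
    _ = (N : ℝ) * (T : ℝ) * δuni := by
        simp [Finset.sum_const]; ring
    _ = Δ := by
        rw [hδuni]; field_simp
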